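/- Suppose the synchronization word s ∈ ℂ^n has ideal autocorrelation, i.e. Re(s_τ^H s_μ) = 0 for all τ ≠ μ, and ‖s‖² = nρ_s. Then for Y ~ CN(0, (1+ρ)I_n) and f as above, P(f(μ) ≤ f(τ)) = Q(√(n ρ_s / (1+ρ))) for every τ ≠ μ, and consequently the union bound on the synchronization error probability satisfies P(∃ τ ≠ μ : f(μ) ≤ f(τ)) ≤ (n−1) Q(√(n ρ_s / (1+ρ))). -/

import Mathlib

/-!
The cross term of `f μ₀ - f τ` vanishes by ideal autocorrelation, so
`f μ₀ Y - f τ Y = n ρ_s + Re ⟨s_{μ₀} - s_τ, Y⟩`. The second summand is a sum of independent real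
Gaussians, hence Gaussian with variance `‖s_{μ₀} - s_τ‖² (1 + ρ) / 2 = n ρ_s (1 + ρ)` (Pythagoras),
and the pairwise error probability is `P(N(0,1) > n ρ_s / √(n ρ_s (1 + ρ)))`. The union bound over
the `n - 1` wrong shifts gives the second claim.
-/

open MeasureTheory Real

/-- The circular complex Gaussian `CN(0, 2v)`: real and imaginary parts independent `N(0, v)`. -/
noncomputable def complexGaussian (v : NNReal) : Measure ℂ :=
  ((ProbabilityTheory.gaussianReal 0 v).prod (ProbabilityTheory.gaussianReal 0 v)).map
    (fun p => (p.1 : ℂ) + p.2 * Complex.I)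

open ProbabilityTheory ComplexConjugate NNReal

namespace ProbabilityTheory

variable {Ω ι : Type*} {mΩ : MeasurableSpace Ω} {P : Measure Ω} [IsProbabilityMeasure P]

lemma iIndepFun.map_sum_eq_gaussianReal {X : ι → Ω → ℝ} (hX : iIndepFun X P)
    (hXm : ∀ i, Measurable (X i)) {m : ι → ℝ} {v : ι → ℝ≥0}
    (hlaw : ∀ i, P.map (X i) = gaussianReal (m i) (v i)) (s : Finset ι) :
    P.map (∑ i ∈ s, X i) = gaussianReal (∑ i ∈ s, m i) (∑ i ∈ s, v i) := by
  classical
  induction s using Finset.induction_on with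
  | empty =>
    rw [Finset.sum_empty, Finset.sum_empty, Finset.sum_empty, gaussianReal_zero_var]
    exact (Measure.map_const P 0).trans (by simp)
  | insert j s hj ih =>
    rw [Finset.sum_insert hj, Finset.sum_insert hj, Finset.sum_insert hj, add_comm (X j),
      add_comm (m j), add_comm (v j)]
    exact gaussianReal_add_gaussianReal_of_indepFun
      (hX.indepFun_finsetSum_of_notMem hXm hj) ih (hlaw j)

lemma gaussianReal_Iic_neg_eq_Ioi (v : ℝ≥0) (hv : v ≠ 0) (a : ℝ) :
    gaussianReal 0 v (Set.Iic (-a)) = gaussianReal 0 1 (Set.Ioi (a / √v)) := by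
  have hσ : 0 < √(v : ℝ) := Real.sqrt_pos.mpr (by positivity)
  have hscale : (gaussianReal 0 1).map (-√(v : ℝ) * ·) = gaussianReal 0 v := by
    rw [gaussianReal_map_const_mul, mul_zero, mul_one]
    congr 1
    exact NNReal.coe_injective (by simp)
  have hpre : (-√(v : ℝ) * ·) ⁻¹' Set.Iic (-a) = Set.Ici (a / √v) := by
    ext x
    simp [div_le_iff₀ hσ, mul_comm x]
  rw [← hscale, Measure.map_apply (by fun_prop) measurableSet_Iic, hpre]
  have := nullSingletonClass_gaussianReal (μ := 0) one_ne_zero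
  exact measure_congr Ioi_ae_eq_Ici.symm

end ProbabilityTheory

variable {ι : Type*}

instance (v : ℝ≥0) : IsProbabilityMeasure (complexGaussian v) :=
  Measure.isProbabilityMeasure_map (by fun_prop)

lemma complexGaussian_map_re_conj_mul (v : ℝ≥0) (a : ℂ) :
    (complexGaussian v).map (fun z => (conj a * z).re) = gaussianReal 0 (‖a‖₊ ^ 2 * v) := by
  have hcomp : (fun z : ℂ => (conj a * z).re) ∘ (fun p : ℝ × ℝ => (p.1 : ℂ) + p.2 * Complex.I)
      = (fun q : ℝ × ℝ => q.1 + q.2) ∘ Prod.map (a.re * ·) (a.im * ·) := by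
    funext p
    simp
  rw [complexGaussian, Measure.map_map (by fun_prop) (by fun_prop), hcomp,
    ← Measure.map_map measurable_add (by fun_prop), ← Measure.map_prod_map _ _ (by fun_prop)
    (by fun_prop), gaussianReal_map_const_mul, gaussianReal_map_const_mul, ← Measure.conv,
    gaussianReal_conv_gaussianReal, ← add_mul]
  simp only [mul_zero]
  congr 1
  refine NNReal.coe_injective ?_
  simp only [NNReal.coe_add, NNReal.coe_mul, NNReal.coe_pow, coe_nnnorm, NNReal.coe_mk,
    Complex.sq_norm, Complex.normSq_apply]
  ring

lemma pi_complexGaussian_map_re_sum_conj_mul [Fintype ι] (v : ℝ≥0) (a : ι → ℂ) :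
    (Measure.pi fun _ : ι => complexGaussian v).map (fun y => (∑ i, conj (a i) * y i).re)
      = gaussianReal 0 ((∑ i, ‖a i‖₊ ^ 2) * v) := by
  have hlaw : ∀ i, (Measure.pi fun _ : ι => complexGaussian v).map
      (fun y => (conj (a i) * y i).re) = gaussianReal 0 (‖a i‖₊ ^ 2 * v) := fun i => by
    conv_rhs => rw [← complexGaussian_map_re_conj_mul,
      ← (measurePreserving_eval (fun _ : ι => complexGaussian v) i).map_eq,
      Measure.map_map (by fun_prop) (by fun_prop)]
    rfl
  have h := (iIndepFun_pi (X := fun i (z : ℂ) => (conj (a i) * z).re)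
    (fun i => by fun_prop)).map_sum_eq_gaussianReal (fun i => by fun_prop) hlaw Finset.univ
  simp only [Finset.sum_const_zero, ← Finset.sum_mul] at h
  convert h using 2
  ext y
  simp [Complex.re_sum]

lemma pi_complexGaussian_pairwise_error [Fintype ι] {v : ℝ≥0} (hv : v ≠ 0) {u w : ι → ℂ}
    {E : ℝ} (hE : 0 < E) (hu : ∑ i, ‖u i‖ ^ 2 = E) (hw : ∑ i, ‖w i‖ ^ 2 = E)
    (horth : (∑ i, conj (w i) * u i).re = 0) :
    Measure.pi (fun _ : ι => complexGaussian v)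
        {y | (∑ i, conj (u i) * (u i + y i)).re ≤ (∑ i, conj (w i) * (u i + y i)).re} =
      gaussianReal 0 1 (Set.Ioi √(E / (2 * v))) := by
  set L : (ι → ℂ) → ℝ := fun y => (∑ i, conj (u i - w i) * y i).re
  have hgap : ∀ y, (∑ i, conj (u i) * (u i + y i)).re - (∑ i, conj (w i) * (u i + y i)).re
      = E + L y := by
    intro y
    have hpt : ∀ i, (conj (u i) * (u i + y i)).re - (conj (w i) * (u i + y i)).re
        = ‖u i‖ ^ 2 - (conj (w i) * u i).re + (conj (u i - w i) * y i).re := fun i => by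
      simp only [Complex.sq_norm, Complex.normSq_apply, map_sub, Complex.mul_re, Complex.add_re,
        Complex.add_im, Complex.sub_re, Complex.sub_im, Complex.conj_re, Complex.conj_im]
      ring
    rw [Complex.re_sum, Complex.re_sum, ← Finset.sum_sub_distrib, Finset.sum_congr rfl
      fun i _ => hpt i, Finset.sum_add_distrib, Finset.sum_sub_distrib, hu, ← Complex.re_sum,
      horth, sub_zero, ← Complex.re_sum]
  -- Pythagoras: `u ⟂ w` for the real inner product
  have hvar : ∑ i, ‖u i - w i‖ ^ 2 = 2 * E := by
    have hpt : ∀ i, ‖u i - w i‖ ^ 2 = ‖u i‖ ^ 2 + ‖w i‖ ^ 2 - 2 * (conj (w i) * u i).re :=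
      fun i => by
        simp only [Complex.sq_norm, Complex.normSq_apply, Complex.mul_re, Complex.sub_re,
          Complex.sub_im, Complex.conj_re, Complex.conj_im]
        ring
    simp only [hpt, Finset.sum_sub_distrib, Finset.sum_add_distrib, ← Finset.mul_sum, hu, hw,
      ← Complex.re_sum, horth]
    ring
  set V : ℝ≥0 := (∑ i, ‖u i - w i‖₊ ^ 2) * v
  have hV : (V : ℝ) = 2 * E * v := by simp [V, hvar]
  have hevent : {y | (∑ i, conj (u i) * (u i + y i)).re ≤ (∑ i, conj (w i) * (u i + y i)).re}
      = L ⁻¹' Set.Iic (-E) := by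
    ext y
    have := hgap y
    simp only [Set.mem_ofPred_eq, Set.mem_preimage, Set.mem_Iic]
    constructor <;> intro <;> linarith
  have hv' : (v : ℝ) ≠ 0 := NNReal.coe_ne_zero.mpr hv
  have hthreshold : E / √(V : ℝ) = √(E / (2 * v)) := by
    calc E / √(V : ℝ) = √(E ^ 2 / (2 * E * v)) := by
          rw [hV, Real.sqrt_div' _ (by positivity), Real.sqrt_sq hE.le]
      _ = √(E / (2 * v)) := by
          congr 1
          field_simp
  rw [hevent, ← Measure.map_apply (by fun_prop) measurableSet_Iic,
    pi_complexGaussian_map_re_sum_conj_mul, gaussianReal_Iic_neg_eq_Ioi _ _ E, hthreshold]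
  rw [← NNReal.coe_ne_zero, hV]
  positivity

lemma measure_setOf_exists_ne_le {α : Type*} [MeasurableSpace α] [Fintype ι] (μ : Measure α)
    (i₀ : ι) (S : ι → Set α) {c : ENNReal} (h : ∀ i, i ≠ i₀ → μ (S i) ≤ c) :
    μ {x | ∃ i, i ≠ i₀ ∧ x ∈ S i} ≤ ((Fintype.card ι - 1 : ℕ) : ENNReal) * c := by
  classical
  have hunion : {x | ∃ i, i ≠ i₀ ∧ x ∈ S i} = ⋃ i ∈ Finset.univ.erase i₀, S i := by
    ext x
    simp
  calc μ {x | ∃ i, i ≠ i₀ ∧ x ∈ S i} ≤ ∑ i ∈ Finset.univ.erase i₀, μ (S i) :=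
        hunion ▸ measure_biUnion_finset_le _ _
    _ ≤ ∑ i ∈ Finset.univ.erase i₀, c :=
        Finset.sum_le_sum fun i hi => h i (Finset.ne_of_mem_erase hi)
    _ = _ := by simp [Finset.card_erase_of_mem]

theorem stmt15_general (n : ℕ) (ρ ρs : ℝ) (hρ : 0 ≤ ρ) (hρs : 0 < ρs)
    (s : Fin n → ℂ) (μ₀ : Fin n)
    (hcorr : ∀ τ : Fin n, τ ≠ μ₀ → (∑ i, (starRingEnd ℂ) (s (i - τ)) * s (i - μ₀)).re = 0)
    (hnorm : ∑ i, ‖s i‖ ^ 2 = n * ρs)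
    (μY : Measure (Fin n → ℂ))
    (hY : μY = Measure.pi (fun _ : Fin n => complexGaussian (Real.toNNReal ((1 + ρ) / 2))))
    (f : Fin n → (Fin n → ℂ) → ℝ)
    (hf : ∀ t y, f t y = (∑ i, (starRingEnd ℂ) (s (i - t)) * (s (i - μ₀) + y i)).re) :
    (∀ τ : Fin n, τ ≠ μ₀ → μY {y | f μ₀ y ≤ f τ y} =
        ProbabilityTheory.gaussianReal 0 1 (Set.Ioi (Real.sqrt (n * ρs / (1 + ρ))))) ∧
    μY {y | ∃ τ : Fin n, τ ≠ μ₀ ∧ f μ₀ y ≤ f τ y} ≤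
      ((n - 1 : ℕ) : ENNReal) *
        ProbabilityTheory.gaussianReal 0 1 (Set.Ioi (Real.sqrt (n * ρs / (1 + ρ)))) := by
  have hv : ((1 + ρ) / 2).toNNReal ≠ 0 := (Real.toNNReal_pos.mpr (by linarith)).ne'
  have : NeZero n := ⟨μ₀.pos.ne'⟩
  have hshift : ∀ t : Fin n, ∑ i, ‖s (i - t)‖ ^ 2 = n * ρs := fun t =>
    (Fintype.sum_equiv (Equiv.subRight t) _ _ fun _ => rfl).trans hnorm
  have hE : 0 < (n : ℝ) * ρs := mul_pos (by exact_mod_cast μ₀.pos) hρs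
  have pairwise : ∀ τ, τ ≠ μ₀ → μY {y | f μ₀ y ≤ f τ y} =
      gaussianReal 0 1 (Set.Ioi √(n * ρs / (1 + ρ))) := fun τ hτ => by
    have h := pi_complexGaussian_pairwise_error hv hE (hshift μ₀) (hshift τ) (hcorr τ hτ)
    rw [Real.coe_toNNReal _ (by linarith), mul_div_cancel₀ _ two_ne_zero] at h
    simpa only [hY, hf] using h
  refine ⟨pairwise, ?_⟩
  simpa only [Fintype.card_fin, Set.mem_ofPred_eq] using
    measure_setOf_exists_ne_le μY μ₀ (fun τ => {y | f μ₀ y ≤ f τ y})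
      fun τ hτ => (pairwise τ hτ).le

/-- if the synchronization word `s` has ideal autocorrelation
(`Re(s_τᴴ s_{μ₀}) = 0` for `τ ≠ μ₀`) and `‖s‖² = n ρ_s`, then for `Y ~ CN(0,(1+ρ)Iₙ)` and the
correlation metric `f`, each pairwise error probability equals `Q(√(n ρ_s/(1+ρ)))`, and the
union bound gives `P(∃ τ ≠ μ₀, f(μ₀) ≤ f(τ)) ≤ (n−1) Q(√(n ρ_s/(1+ρ)))`. -/
theorem stmt15 (n : ℕ) (hn : 2 ≤ n) (ρ ρs : ℝ) (hρ : 0 ≤ ρ) (hρs : 0 < ρs)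
    (s : Fin n → ℂ) (μ₀ : Fin n)
    (hcorr : ∀ τ : Fin n, τ ≠ μ₀ → (∑ i, (starRingEnd ℂ) (s (i - τ)) * s (i - μ₀)).re = 0)
    (hnorm : ∑ i, ‖s i‖ ^ 2 = n * ρs)
    (μY : Measure (Fin n → ℂ))
    (hY : μY = Measure.pi (fun _ : Fin n => complexGaussian (Real.toNNReal ((1 + ρ) / 2))))
    (f : Fin n → (Fin n → ℂ) → ℝ)
    (hf : ∀ t y, f t y = (∑ i, (starRingEnd ℂ) (s (i - t)) * (s (i - μ₀) + y i)).re) :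
    (∀ τ : Fin n, τ ≠ μ₀ → μY {y | f μ₀ y ≤ f τ y} =
        ProbabilityTheory.gaussianReal 0 1 (Set.Ioi (Real.sqrt (n * ρs / (1 + ρ))))) ∧
    μY {y | ∃ τ : Fin n, τ ≠ μ₀ ∧ f μ₀ y ≤ f τ y} ≤
      ((n - 1 : ℕ) : ENNReal) *
        ProbabilityTheory.gaussianReal 0 1 (Set.Ioi (Real.sqrt (n * ρs / (1 + ρ)))) :=
  stmt15_general n ρ ρs hρ hρs s μ₀ hcorr hnorm μY hY f hf
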